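/- arXiv:2303.13146 — 4 statements merged into one kernel-verified Lean document; each statement's English description precedes it below -/
import Mathlib

section
/- Let C be a nonempty closed subset of a Euclidean space X and let D be an affine subspace of X. If for every d in D the set of projections of d onto C has nonempty intersection with D, then for every x in X, the projection of x onto C ∩ D equals P_C(P_D(x)) ∩ D, where P_D(x) is the (unique) projection of x onto D. -/
/-! For points of `D`, squared distances from `x` and from `P_D x` differ by the constant
`‖x - P_D x‖²` (Pythagoras), so projecting onto `C ∩ D` from `x` or from `P_D x` gives the same
set. Since some nearest point of `C` to `P_D x` lies in `D`, the nearest points of `C ∩ D` to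
`P_D x` are exactly the nearest points of `C` that lie in `D`. -/

open Filter Metric
open scoped RealInnerProductSpace Pointwise

noncomputable section

variable {X : Type*} [NormedAddCommGroup X] [InnerProductSpace ℝ X]

/-- Set-valued metric projection onto `C`. -/
def proj (C : Set X) (x : X) : Set X :=
  {p | p ∈ C ∧ ‖x - p‖ = Metric.infDist x C}

/-- Limiting normal cone to `C` at `x` (empty when `x ∉ C`). -/
def limNormalCone (C : Set X) (x : X) : Set X :=
  {u | x ∈ C ∧ ∃ (τ : ℕ → ℝ) (xs zs : ℕ → X),
    (∀ k, 0 ≤ τ k) ∧ (∀ k, zs k ∈ proj C (xs k)) ∧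
    Tendsto xs atTop (nhds x) ∧
    Tendsto (fun k => τ k • (zs k - xs k)) atTop (nhds u)}

/-- Super-regularity of a set at a point. -/
def SuperRegular (C : Set X) (xb : X) : Prop :=
  ∀ ε > 0, ∃ δ > 0, ∀ y ∈ C ∩ Metric.closedBall xb δ, ∀ z ∈ C ∩ Metric.closedBall xb δ,
    ∀ u ∈ limNormalCone C z, ⟪u, y - z⟫ ≤ ε * ‖u‖ * ‖y - z‖

/-- Diagonal embedding of `X` into the product `PiLp 2 (fun _ : Fin m => X)`. -/
def diagMap (m : ℕ) (u : X) : PiLp 2 (fun _ : Fin m => X) :=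
  (WithLp.equiv 2 _).symm (fun _ => u)

/-- The diagonal subspace of the product space. -/
def diagSub (m : ℕ) (X : Type*) [NormedAddCommGroup X] [InnerProductSpace ℝ X] :
    Submodule ℝ (PiLp 2 (fun _ : Fin m => X)) where
  carrier := {x | ∀ i j, x i = x j}
  add_mem' := by
    intro a b ha hb i j
    show a i + b i = a j + b j
    rw [ha i j, hb i j]
  zero_mem' := by intro i j; rfl
  smul_mem' := by
    intro c a ha i j
    show c • a i = c • a j
    rw [ha i j]
theorem mem_proj_iff {E : Type*} [NormedAddCommGroup E] {S : Set E} {x p : E} :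
    p ∈ proj S x ↔ p ∈ S ∧ ∀ s ∈ S, ‖x - p‖ ≤ ‖x - s‖ := by
  simp only [proj, Set.mem_ofPred_eq, ← dist_eq_norm]
  constructor
  · rintro ⟨hp, hdist⟩
    exact ⟨hp, fun s hs => hdist ▸ infDist_le_dist_of_mem hs⟩
  · rintro ⟨hp, hmin⟩
    exact ⟨hp, le_antisymm ((le_infDist ⟨p, hp⟩).2 hmin) (infDist_le_dist_of_mem hp)⟩

theorem proj_inter_eq_of_nonempty {E : Type*} [NormedAddCommGroup E] {C S : Set E} {y : E}
    (h : (proj C y ∩ S).Nonempty) :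
    proj (C ∩ S) y = proj C y ∩ S := by
  obtain ⟨c, hc, hcS⟩ := h
  rw [mem_proj_iff] at hc
  ext z
  simp only [Set.mem_inter_iff, mem_proj_iff]
  constructor
  · rintro ⟨⟨hzC, hzS⟩, hmin⟩
    exact ⟨⟨hzC, fun s hs => (hmin c ⟨hc.1, hcS⟩).trans (hc.2 s hs)⟩, hzS⟩
  · rintro ⟨⟨hzC, hmin⟩, hzS⟩
    exact ⟨⟨hzC, hzS⟩, fun s hs => hmin s hs.1⟩

theorem proj_eq_proj_orthogonalProjection {D : AffineSubspace ℝ X} [Nonempty D]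
    [D.direction.HasOrthogonalProjection] {T : Set X} (hT : T ⊆ D) (x : X) :
    proj T x = proj T (EuclideanGeometry.orthogonalProjection D x) := by
  set p : X := (EuclideanGeometry.orthogonalProjection D x : X)
  have pythagoras : ∀ c ∈ T, ‖x - c‖ ^ 2 = ‖p - c‖ ^ 2 + ‖x - p‖ ^ 2 := fun c hc => by
    simpa only [dist_comm c, dist_eq_norm, ← sq] using
      EuclideanGeometry.dist_sq_eq_dist_orthogonalProjection_sq_add_dist_orthogonalProjection_sq
        x (hT hc)
  ext z
  simp only [mem_proj_iff]
  refine and_congr_right fun hz => forall₂_congr fun s hs => ?_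
  rw [← sq_le_sq₀ (norm_nonneg _) (norm_nonneg _), ← sq_le_sq₀ (norm_nonneg _) (norm_nonneg _),
    pythagoras z hz, pythagoras s hs, add_le_add_iff_right]

theorem stmt0_general
    (C : Set X)
    (D : AffineSubspace ℝ X) [Nonempty D] [D.direction.HasOrthogonalProjection]
    (h : ∀ d ∈ (D : Set X), (proj C d ∩ (D : Set X)).Nonempty) :
    ∀ x : X, proj (C ∩ (D : Set X)) x
      = proj C ((EuclideanGeometry.orthogonalProjection D x : X)) ∩ (D : Set X) := by
  intro x
  rw [proj_eq_proj_orthogonalProjection Set.inter_subset_right x,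
    proj_inter_eq_of_nonempty (h _ (EuclideanGeometry.orthogonalProjection D x).2)]

theorem stmt0 [FiniteDimensional ℝ X]
    (C : Set X) (hCne : C.Nonempty) (hCcl : IsClosed C)
    (D : AffineSubspace ℝ X) [Nonempty D] [D.direction.HasOrthogonalProjection]
    (h : ∀ d ∈ (D : Set X), (proj C d ∩ (D : Set X)).Nonempty) :
    ∀ x : X, proj (C ∩ (D : Set X)) x
      = proj C ((EuclideanGeometry.orthogonalProjection D x : X)) ∩ (D : Set X) :=
  stmt0_general C D h
end
end

section
/- Let C₁,…,C_{r-1} ⊆ X be sets with Cᵢ super-regular at x̄ᵢ ∈ Cᵢ for each i. Then the product set B = C₁ × ⋯ × C_{r-1} ⊆ X^{r-1} is super-regular at (x̄₁,…,x̄_{r-1}). -/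
open Filter Metric
open scoped RealInnerProductSpace Pointwise

noncomputable section

variable {X : Type*} [NormedAddCommGroup X] [InnerProductSpace ℝ X]

/-!
Everything splits along the coordinates of `PiLp 2`. A nearest point of a product of sets is
componentwise a nearest point (otherwise replacing one coordinate would get strictly closer),
so the components of a limiting normal to the product are limiting normals to the factors.
Summing the componentwise super-regularity inequalities and applying Cauchy–Schwarz to
`∑ ‖u i‖ * ‖y i - z i‖` gives the inequality for the product, with `δ` the least of the
finitely many radii.
-/

open Finset Function WithLp

lemma SuperRegular.eventually_nhdsGT {C : Set X} {x : X} (h : SuperRegular C x) {ε : ℝ}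
    (hε : 0 < ε) :
    ∀ᶠ δ in nhdsWithin 0 (Set.Ioi 0), ∀ y ∈ C ∩ closedBall x δ, ∀ z ∈ C ∩ closedBall x δ,
      ∀ u ∈ limNormalCone C z, ⟪u, y - z⟫ ≤ ε * ‖u‖ * ‖y - z‖ := by
  obtain ⟨δ₀, hδ₀, hC⟩ := h ε hε
  filter_upwards [Ioo_mem_nhdsGT hδ₀] with δ hδ y hy z hz
  exact hC y ⟨hy.1, closedBall_subset_closedBall hδ.2.le hy.2⟩ z
    ⟨hz.1, closedBall_subset_closedBall hδ.2.le hz.2⟩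

lemma PiLp.norm_sub_toLp_update_sq {ι : Type*} [Fintype ι] [DecidableEq ι] {E : ι → Type*}
    [∀ i, SeminormedAddCommGroup (E i)] (x p : PiLp 2 E) (i : ι) (q : E i) :
    ‖x - toLp 2 (update (ofLp p) i q)‖ ^ 2 + ‖x i - p i‖ ^ 2 =
      ‖x - p‖ ^ 2 + ‖x i - q‖ ^ 2 := by
  have hrest : ∀ j ∈ univ.erase i, ‖x j - update (ofLp p) i q j‖ ^ 2 = ‖x j - p j‖ ^ 2 :=
    fun j hj => by rw [update_of_ne (ne_of_mem_erase hj)]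
  simp only [PiLp.norm_sq_eq_of_L2, PiLp.sub_apply]
  rw [← add_sum_erase _ _ (mem_univ i), ← add_sum_erase _ _ (mem_univ i), sum_congr rfl hrest,
    update_self]
  ring

section Product

variable {ι : Type*} [Fintype ι] {E : ι → Type*} [∀ i, NormedAddCommGroup (E i)]
  {C : ∀ i, Set (E i)}

lemma apply_mem_proj_pi {x p : PiLp 2 E} (hp : p ∈ proj {y : PiLp 2 E | ∀ i, y i ∈ C i} x)
    (i : ι) : p i ∈ proj (C i) (x i) := by
  classical
  obtain ⟨hpC, hpx⟩ := hp
  refine ⟨hpC i, le_antisymm ?_ (by simpa [dist_eq_norm] using infDist_le_dist_of_mem (hpC i))⟩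
  refine (le_infDist ⟨p i, hpC i⟩).2 fun q hq => ?_
  have hp'C : toLp 2 (update (ofLp p) i q) ∈ {y : PiLp 2 E | ∀ i, y i ∈ C i} := fun j => by
    rcases eq_or_ne j i with rfl | hj
    · simpa using hq
    · simpa [update_of_ne hj] using hpC j
  have hle : ‖x - p‖ ≤ ‖x - toLp 2 (update (ofLp p) i q)‖ := by
    simpa [hpx, dist_eq_norm] using infDist_le_dist_of_mem (x := x) hp'C
  have hsq : ‖x i - p i‖ ^ 2 ≤ ‖x i - q‖ ^ 2 := by
    linarith [PiLp.norm_sub_toLp_update_sq x p i q, pow_le_pow_left₀ (norm_nonneg _) hle 2]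
  rw [dist_eq_norm]
  exact le_of_pow_le_pow_left₀ two_ne_zero (norm_nonneg _) hsq

variable [∀ i, InnerProductSpace ℝ (E i)]

lemma apply_mem_limNormalCone_pi {z u : PiLp 2 E}
    (hu : u ∈ limNormalCone {y : PiLp 2 E | ∀ i, y i ∈ C i} z) (i : ι) :
    u i ∈ limNormalCone (C i) (z i) := by
  obtain ⟨hz, τ, xs, zs, hτ, hzs, hxs, hlim⟩ := hu
  exact ⟨hz i, τ, fun k => xs k i, fun k => zs k i, hτ, fun k => apply_mem_proj_pi (hzs k) i,
    ((PiLp.continuous_apply 2 E i).tendsto z).comp hxs,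
    ((PiLp.continuous_apply 2 E i).tendsto u).comp hlim⟩

lemma PiLp.inner_le_mul_norm_mul_norm_of_forall {ε : ℝ} (hε : 0 ≤ ε) {u v : PiLp 2 E}
    (h : ∀ i, ⟪u i, v i⟫ ≤ ε * ‖u i‖ * ‖v i‖) : ⟪u, v⟫ ≤ ε * ‖u‖ * ‖v‖ := by
  have hcs : ∑ i, ‖u i‖ * ‖v i‖ ≤ ‖u‖ * ‖v‖ := by
    simpa only [PiLp.norm_eq_of_L2] using Real.sum_mul_le_sqrt_mul_sqrt univ (‖u ·‖) (‖v ·‖)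
  calc ⟪u, v⟫ = ∑ i, ⟪u i, v i⟫ := PiLp.inner_apply u v
    _ ≤ ∑ i, ε * (‖u i‖ * ‖v i‖) := sum_le_sum fun i _ => (h i).trans_eq (mul_assoc _ _ _)
    _ = ε * ∑ i, ‖u i‖ * ‖v i‖ := (mul_sum _ _ _).symm
    _ ≤ ε * (‖u‖ * ‖v‖) := mul_le_mul_of_nonneg_left hcs hε
    _ = ε * ‖u‖ * ‖v‖ := (mul_assoc _ _ _).symm

theorem SuperRegular.pi {x : ∀ i, E i} (h : ∀ i, SuperRegular (C i) (x i)) :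
    SuperRegular {y : PiLp 2 E | ∀ i, y i ∈ C i} (toLp 2 x) := by
  intro ε hε
  obtain ⟨δ, hδ, hδpos⟩ :=
    ((eventually_all.2 fun i => (h i).eventually_nhdsGT hε).and self_mem_nhdsWithin).exists
  refine ⟨δ, hδpos, ?_⟩
  rintro y ⟨hy, hyx⟩ z ⟨hz, hzx⟩ u hu
  exact PiLp.inner_le_mul_norm_mul_norm_of_forall hε.le fun i =>
    hδ i (y i) ⟨hy i, (PiLp.dist_apply_le y _ i).trans hyx⟩
      (z i) ⟨hz i, (PiLp.dist_apply_le z _ i).trans hzx⟩ (u i) (apply_mem_limNormalCone_pi hu i)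

end Product

theorem stmt6_general {m : ℕ} (C : Fin m → Set X) (xb : Fin m → X)
    (hsr : ∀ i, SuperRegular (C i) (xb i)) :
    SuperRegular {y : PiLp 2 (fun _ : Fin m => X) | ∀ i, y i ∈ C i}
      ((WithLp.equiv 2 _).symm xb) :=
  SuperRegular.pi hsr

theorem stmt6 {m : ℕ} (C : Fin m → Set X) (xb : Fin m → X)
    (hxb : ∀ i, xb i ∈ C i) (hsr : ∀ i, SuperRegular (C i) (xb i)) :
    SuperRegular {y : PiLp 2 (fun _ : Fin m => X) | ∀ i, y i ∈ C i}
      ((WithLp.equiv 2 _).symm xb) :=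
  stmt6_general C xb hsr
end
end

section
/- Let C_r ⊆ X be a nonempty closed set that is super-regular at x̄ ∈ C_r. Then the set K = {(x,…,x) ∈ X^{r-1} : x ∈ C_r} is super-regular at the diagonal point (x̄,…,x̄). -/
open Filter Metric
open scoped RealInnerProductSpace Pointwise

noncomputable section

variable {X : Type*} [NormedAddCommGroup X] [InnerProductSpace ℝ X]

/-! Write `j = diagMap m`. If `j c` is a nearest point of `j '' C` to `x`, then `c` is a nearest
point of `C` to the mean of the components of `x`, by Pythagoras with respect to the diagonal.
Hence a limiting normal `u` to `j '' C` at `j b` has `∑ i, u i` as a limiting normal to `C` at `b`.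
Since `⟪u, j a - j b⟫ = ⟪∑ i, u i, a - b⟫`, `‖∑ i, u i‖ ≤ √m ‖u‖` and `‖j w‖ = √m ‖w‖`, the
super-regularity inequality of `C` transfers to `j '' C` with the same `δ`. -/

section Diagonal

variable {m : ℕ}

@[simp]
lemma diagMap_apply (w : X) (i : Fin m) : diagMap m w i = w := rfl

lemma eq_diagMap_iff {y : PiLp 2 (fun _ : Fin m => X)} {a : X} :
    y = diagMap m a ↔ ∀ i, y i = a := by
  rw [← (WithLp.ofLp_injective 2).eq_iff, funext_iff]
  rfl

lemma setOf_forall_apply_eq_eq_image (C : Set X) :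
    {y : PiLp 2 (fun _ : Fin m => X) | ∃ a ∈ C, ∀ i, y i = a} = diagMap m '' C := by
  ext y
  simp only [Set.mem_ofPred_eq, Set.mem_image, eq_comm (b := y), eq_diagMap_iff]

lemma diagMap_injective (hm : m ≠ 0) : Function.Injective (diagMap (X := X) m) := fun a b h => by
  simpa using congrArg (· ⟨0, Nat.pos_of_ne_zero hm⟩) h

lemma diagMap_sub (a b : X) : diagMap m (a - b) = diagMap m a - diagMap m b :=
  (eq_diagMap_iff.mpr fun i => by simp).symm

lemma sum_diagMap (w : X) : ∑ i, diagMap m w i = (m : ℝ) • w := by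
  simp [← Nat.cast_smul_eq_nsmul ℝ]

lemma inner_diagMap (u : PiLp 2 (fun _ : Fin m => X)) (w : X) :
    ⟪u, diagMap m w⟫ = ⟪∑ i, u i, w⟫ := by
  simp [PiLp.inner_apply, sum_inner]

lemma norm_diagMap (w : X) : ‖diagMap m w‖ = √m * ‖w‖ := by
  rw [← Real.sqrt_sq (norm_nonneg (diagMap m w)), PiLp.norm_sq_eq_of_L2]
  simp [Real.sqrt_mul (Nat.cast_nonneg m), Real.sqrt_sq (norm_nonneg w)]

lemma dist_diagMap (a b : X) : dist (diagMap m a) (diagMap m b) = √m * dist a b := by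
  rw [dist_eq_norm, dist_eq_norm, ← diagMap_sub, norm_diagMap]

lemma norm_sum_apply_le (u : PiLp 2 (fun _ : Fin m => X)) : ‖∑ i, u i‖ ≤ √m * ‖u‖ := by
  set v := ∑ i, u i
  have hsq : ‖v‖ * ‖v‖ ≤ √m * ‖u‖ * ‖v‖ := calc
    ‖v‖ * ‖v‖ = ⟪u, diagMap m v⟫ := by rw [inner_diagMap, real_inner_self_eq_norm_mul_norm]
    _ ≤ ‖u‖ * ‖diagMap m v‖ := real_inner_le_norm u _
    _ = √m * ‖u‖ * ‖v‖ := by rw [norm_diagMap]; ring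
  rcases (norm_nonneg v).eq_or_lt with hv | hv
  · rw [← hv]; positivity
  · exact le_of_mul_le_mul_right hsq hv

lemma continuous_sum_apply :
    Continuous fun x : PiLp 2 (fun _ : Fin m => X) => ∑ i, x i :=
  continuous_finsetSum _ fun i _ => PiLp.continuous_apply 2 _ i

/-- The centre of mass of the components; `diagMap m (diagMean x)` is the orthogonal projection
of `x` onto the diagonal. -/
def diagMean (x : PiLp 2 (fun _ : Fin m => X)) : X := (m : ℝ)⁻¹ • ∑ i, x i

lemma continuous_diagMean : Continuous (diagMean (X := X) (m := m)) :=
  continuous_const.smul continuous_sum_apply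

lemma smul_diagMean (hm : m ≠ 0) (x : PiLp 2 (fun _ : Fin m => X)) :
    (m : ℝ) • diagMean x = ∑ i, x i := by
  rw [diagMean, smul_smul, mul_inv_cancel₀ (Nat.cast_ne_zero.mpr hm), one_smul]

lemma diagMean_diagMap (hm : m ≠ 0) (w : X) : diagMean (diagMap m w) = w := by
  rw [diagMean, sum_diagMap, smul_smul, inv_mul_cancel₀ (Nat.cast_ne_zero.mpr hm), one_smul]

lemma norm_sub_diagMap_sq (hm : m ≠ 0) (x : PiLp 2 (fun _ : Fin m => X)) (c : X) :
    ‖x - diagMap m c‖ ^ 2 = ‖x - diagMap m (diagMean x)‖ ^ 2 + m * ‖diagMean x - c‖ ^ 2 := by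
  have horth : ⟪x - diagMap m (diagMean x), diagMap m (diagMean x - c)⟫ = 0 := by
    simp only [inner_diagMap, PiLp.sub_apply]
    rw [Finset.sum_sub_distrib, sum_diagMap, smul_diagMean hm, sub_self, inner_zero_left]
  have hsplit : x - diagMap m c = (x - diagMap m (diagMean x)) + diagMap m (diagMean x - c) := by
    rw [diagMap_sub]; abel
  rw [hsplit, norm_add_sq_real, horth, norm_diagMap, mul_pow,
    Real.sq_sqrt (Nat.cast_nonneg m)]
  ring

end Diagonal

section Projection

lemma norm_sub_le_of_mem_proj {C : Set X} {x p q : X} (hp : p ∈ proj C x) (hq : q ∈ C) :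
    ‖x - p‖ ≤ ‖x - q‖ := by
  rw [hp.2, ← dist_eq_norm]
  exact infDist_le_dist_of_mem hq

lemma mem_proj_of_forall_norm_sub_le {C : Set X} {x p : X} (hp : p ∈ C)
    (h : ∀ q ∈ C, ‖x - p‖ ≤ ‖x - q‖) : p ∈ proj C x := by
  refine ⟨hp, le_antisymm ?_ ?_⟩
  · exact (le_infDist ⟨p, hp⟩).mpr fun q hq => by rw [dist_eq_norm]; exact h q hq
  · rw [← dist_eq_norm]; exact infDist_le_dist_of_mem hp

lemma mem_proj_diagMean {m : ℕ} (hm : m ≠ 0) {C : Set X} {x : PiLp 2 (fun _ : Fin m => X)}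
    {c : X} (hc : c ∈ C) (hx : diagMap m c ∈ proj (diagMap m '' C) x) :
    c ∈ proj C (diagMean x) := by
  refine mem_proj_of_forall_norm_sub_le hc fun q hq => ?_
  have hle := norm_sub_le_of_mem_proj hx (Set.mem_image_of_mem _ hq)
  have hsq := pow_le_pow_left₀ (norm_nonneg _) hle 2
  rw [norm_sub_diagMap_sq hm x c, norm_sub_diagMap_sq hm x q] at hsq
  have hmpos : (0 : ℝ) < m := Nat.cast_pos.mpr (Nat.pos_of_ne_zero hm)
  exact pow_le_pow_iff_left₀ (norm_nonneg _) (norm_nonneg _) two_ne_zero |>.mp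
    (le_of_mul_le_mul_left (by linarith) hmpos)

end Projection

lemma sum_apply_mem_limNormalCone {m : ℕ} (hm : m ≠ 0) {C : Set X} {b : X}
    {u : PiLp 2 (fun _ : Fin m => X)} (hu : u ∈ limNormalCone (diagMap m '' C) (diagMap m b)) :
    ∑ i, u i ∈ limNormalCone C b := by
  obtain ⟨hb, τ, xs, zs, hτ, hproj, hxs, hlim⟩ := hu
  choose c hcC hc using fun k => (hproj k).1
  refine ⟨(diagMap_injective hm).mem_set_image.mp hb, fun k => m * τ k, fun k => diagMean (xs k),
    c, fun k => mul_nonneg (Nat.cast_nonneg m) (hτ k),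
    fun k => mem_proj_diagMean hm (hcC k) (hc k ▸ hproj k), ?_, ?_⟩
  · have h := (continuous_diagMean.tendsto _).comp hxs
    rwa [diagMean_diagMap hm] at h
  · have hsum : ∀ k, ∑ i, (τ k • (zs k - xs k)) i = ((m : ℝ) * τ k) • (c k - diagMean (xs k)) := by
      intro k
      simp only [← hc k, PiLp.smul_apply, PiLp.sub_apply, ← Finset.smul_sum,
        Finset.sum_sub_distrib, ← smul_diagMean hm, diagMean_diagMap hm]
      module
    exact ((continuous_sum_apply.tendsto u).comp hlim).congr hsum

theorem SuperRegular.image_diagMap {m : ℕ} (hm : m ≠ 0) {C : Set X} {xb : X}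
    (hC : SuperRegular C xb) : SuperRegular (diagMap m '' C) (diagMap m xb) := by
  intro ε hε
  obtain ⟨δ, hδ, H⟩ := hC ε hε
  have hsqrt : 1 ≤ √(m : ℝ) := Real.one_le_sqrt.mpr (Nat.one_le_cast.mpr (Nat.pos_of_ne_zero hm))
  have hball : ∀ a, diagMap m a ∈ closedBall (diagMap m xb) δ → a ∈ closedBall xb δ := by
    intro a ha
    rw [mem_closedBall, dist_diagMap] at ha
    exact mem_closedBall.mpr (le_trans (le_mul_of_one_le_left dist_nonneg hsqrt) ha)
  refine ⟨δ, hδ, ?_⟩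
  rintro _ ⟨⟨a, ha, rfl⟩, hay⟩ _ ⟨⟨b, hb, rfl⟩, hbz⟩ u hu
  calc ⟪u, diagMap m a - diagMap m b⟫ = ⟪∑ i, u i, a - b⟫ := by
        rw [← diagMap_sub, inner_diagMap]
    _ ≤ ε * ‖∑ i, u i‖ * ‖a - b‖ :=
        H a ⟨ha, hball a hay⟩ b ⟨hb, hball b hbz⟩ _ (sum_apply_mem_limNormalCone hm hu)
    _ ≤ ε * (√m * ‖u‖) * ‖a - b‖ := by gcongr; exact norm_sum_apply_le u
    _ = ε * ‖u‖ * ‖diagMap m a - diagMap m b‖ := by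
        rw [← diagMap_sub, norm_diagMap]; ring

theorem stmt7_general (r : ℕ) (hr : 2 ≤ r)
    (Cr : Set X)
    (xb : X) (hsr : SuperRegular Cr xb) :
    SuperRegular {y : PiLp 2 (fun _ : Fin (r - 1) => X) | ∃ a ∈ Cr, ∀ i, y i = a}
      (diagMap (r - 1) xb) := by
  rw [setOf_forall_apply_eq_eq_image]
  exact hsr.image_diagMap (by omega)

theorem stmt7 (r : ℕ) (hr : 2 ≤ r)
    (Cr : Set X) (hne : Cr.Nonempty) (hcl : IsClosed Cr)
    (xb : X) (hxb : xb ∈ Cr) (hsr : SuperRegular Cr xb) :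
    SuperRegular {y : PiLp 2 (fun _ : Fin (r - 1) => X) | ∃ a ∈ Cr, ∀ i, y i = a}
      (diagMap (r - 1) xb) :=
  stmt7_general r hr Cr xb hsr
end
end

section
/- Let C₁,…,C_r ⊆ X be nonempty closed sets with linearly regular collection around x̄ ∈ X (with constants κ ≥ 0, δ > 0). Let B = C₁ × ⋯ × C_{r-1} and K = {(x,…,x) : x ∈ C_r} in X^{r-1}. Then {B, K} is linearly regular around the diagonal point (x̄,…,x̄); in particular d_{B∩K}(z) ≤ (1 + 2κ√(r−1)) max{d_B(z), d_K(z)} for all z in the ball of radius √(r−1)·δ/2 around (x̄,…,x̄). -/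
open Filter Metric
open scoped RealInnerProductSpace Pointwise

noncomputable section

variable {X : Type*} [NormedAddCommGroup X] [InnerProductSpace ℝ X]

/-!
Project `z` onto the diagonal: with `w` the mean of the coordinates of `z`, Pythagoras gives
`dist z (diag a)² = dist z (diag w)² + m ‖w - a‖²`, so `diag w` is the point of the diagonal
nearest to `z` and `√m ‖w - a‖ ≤ dist z (diag a)`. Hence, with `ρ = max (d_B z) (d_K z)`,
`dist z (diag w) ≤ ρ`, the point `w` is within `2ρ` of every `Cᵢ` and within `ρ` of `C_r`,
and `w` lies in `B(x̄, δ)`. Linear regularity at `w` bounds `d_{C₁ ∩ ⋯ ∩ C_r}(w)` by `2κρ`,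
and the diagonal map, which scales distances by `√m`, carries `C₁ ∩ ⋯ ∩ C_r` onto `B ∩ K`.
-/

lemma infDist_image_le_mul {α β : Type*} [PseudoMetricSpace α] [PseudoMetricSpace β]
    {f : α → β} {K : ℝ} (hK : 0 ≤ K) {x : α} {s : Set α}
    (hf : ∀ y ∈ s, dist (f x) (f y) ≤ K * dist x y) :
    infDist (f x) (f '' s) ≤ K * infDist x s := by
  rcases s.eq_empty_or_nonempty with rfl | hs
  · simp
  have : Nonempty s := hs.to_subtype
  rw [infDist_eq_iInf (s := s), Real.mul_iInf_of_nonneg hK]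
  exact le_ciInf fun y => (infDist_le_dist_of_mem (Set.mem_image_of_mem f y.2)).trans (hf y y.2)

namespace DiagonalProduct

variable {E : Type*} {m : ℕ}

lemma setOf_diag_eq_image (S : Set E) :
    {y : PiLp 2 (fun _ : Fin m => E) | ∃ a ∈ S, ∀ i, y i = a} = diagMap m '' S := by
  ext y
  constructor
  · rintro ⟨a, ha, hya⟩
    exact ⟨a, ha, PiLp.ext fun i => (hya i).symm⟩
  · rintro ⟨a, ha, rfl⟩
    exact ⟨a, ha, fun i => rfl⟩

lemma setOf_pi_inter_diag_eq_image (C : Fin m → Set E) (S : Set E) :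
    {y : PiLp 2 (fun _ : Fin m => E) | ∀ i, y i ∈ C i} ∩ {y | ∃ a ∈ S, ∀ i, y i = a}
      = diagMap m '' ((⋂ i, C i) ∩ S) := by
  rw [setOf_diag_eq_image]
  ext y
  constructor
  · rintro ⟨hyC, a, ha, rfl⟩
    exact ⟨a, ⟨Set.mem_iInter.2 hyC, ha⟩, rfl⟩
  · rintro ⟨a, ⟨haC, ha⟩, rfl⟩
    exact ⟨Set.mem_iInter.1 haC, a, ha, rfl⟩

section Normed

variable [NormedAddCommGroup E]

lemma dist_sq_diagMap (u : PiLp 2 (fun _ : Fin m => E)) (a : E) :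
    dist u (diagMap m a) ^ 2 = ∑ i, dist (u i) a ^ 2 :=
  PiLp.dist_sq_eq_of_L2 _ _

lemma dist_diagMap_diagMap (a b : E) :
    dist (diagMap m a) (diagMap m b) = √m * dist a b := by
  rw [← Real.sqrt_sq dist_nonneg, dist_sq_diagMap, ← Real.sqrt_sq (dist_nonneg (x := a)),
    ← Real.sqrt_mul (Nat.cast_nonneg m)]
  simp [diagMap]

lemma infDist_apply_le_infDist_pi {C : Fin m → Set E} (hC : ∀ i, (C i).Nonempty)
    (z : PiLp 2 (fun _ : Fin m => E)) (i : Fin m) :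
    infDist (z i) (C i) ≤ infDist z {y : PiLp 2 (fun _ : Fin m => E) | ∀ i, y i ∈ C i} := by
  have hB : {y : PiLp 2 (fun _ : Fin m => E) | ∀ i, y i ∈ C i}.Nonempty :=
    ⟨WithLp.toLp 2 fun i => (hC i).some, fun i => (hC i).some_mem⟩
  exact (le_infDist hB).2 fun y hy =>
    (infDist_le_dist_of_mem (hy i)).trans (PiLp.dist_apply_le z y i)

end Normed

variable [NormedAddCommGroup E] [InnerProductSpace ℝ E]

def coordMean (z : PiLp 2 (fun _ : Fin m => E)) : E := (m : ℝ)⁻¹ • ∑ i, z i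

lemma sum_sub_coordMean (z : PiLp 2 (fun _ : Fin m => E)) :
    ∑ i, (z i - coordMean z) = 0 := by
  rcases Nat.eq_zero_or_pos m with rfl | hm
  · simp
  rw [Finset.sum_sub_distrib, Finset.sum_const, Finset.card_univ, Fintype.card_fin,
    ← Nat.cast_smul_eq_nsmul ℝ, coordMean, smul_smul,
    mul_inv_cancel₀ (Nat.cast_ne_zero.2 hm.ne'), one_smul, sub_self]

lemma dist_sq_diagMap_eq_add (z : PiLp 2 (fun _ : Fin m => E)) (a : E) :
    dist z (diagMap m a) ^ 2
      = dist z (diagMap m (coordMean z)) ^ 2 + m * dist (coordMean z) a ^ 2 := by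
  have hcoord : ∀ i, dist (z i) a ^ 2 = dist (z i) (coordMean z) ^ 2
      + 2 * ⟪z i - coordMean z, coordMean z - a⟫ + dist (coordMean z) a ^ 2 := by
    intro i
    simp only [dist_eq_norm]
    rw [← norm_add_sq_real, sub_add_sub_cancel]
  have hcross : ∑ i, 2 * ⟪z i - coordMean z, coordMean z - a⟫ = 0 := by
    rw [← Finset.mul_sum, ← sum_inner, sum_sub_coordMean, inner_zero_left, mul_zero]
  simp only [dist_sq_diagMap, hcoord, Finset.sum_add_distrib, hcross, add_zero,
    Finset.sum_const, Finset.card_univ, Fintype.card_fin, nsmul_eq_mul]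

lemma dist_diagMap_coordMean_le (z : PiLp 2 (fun _ : Fin m => E)) (a : E) :
    dist z (diagMap m (coordMean z)) ≤ dist z (diagMap m a) := by
  refine (pow_le_pow_iff_left₀ dist_nonneg dist_nonneg two_ne_zero).1 ?_
  rw [dist_sq_diagMap_eq_add z a]
  exact le_add_of_nonneg_right (by positivity)

lemma sqrt_mul_dist_coordMean_le (z : PiLp 2 (fun _ : Fin m => E)) (a : E) :
    √m * dist (coordMean z) a ≤ dist z (diagMap m a) := by
  refine (pow_le_pow_iff_left₀ (by positivity) dist_nonneg two_ne_zero).1 ?_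
  rw [dist_sq_diagMap_eq_add z a, mul_pow, Real.sq_sqrt (Nat.cast_nonneg m)]
  exact le_add_of_nonneg_left (sq_nonneg _)

lemma dist_diagMap_coordMean_le_infDist {S : Set E} (hS : S.Nonempty)
    (z : PiLp 2 (fun _ : Fin m => E)) :
    dist z (diagMap m (coordMean z)) ≤ infDist z {y | ∃ a ∈ S, ∀ i, y i = a} := by
  rw [setOf_diag_eq_image, le_infDist (hS.image _)]
  rintro _ ⟨a, -, rfl⟩
  exact dist_diagMap_coordMean_le z a

lemma infDist_coordMean_le_infDist {S : Set E} (hS : S.Nonempty) (hm : 0 < m)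
    (z : PiLp 2 (fun _ : Fin m => E)) :
    infDist (coordMean z) S ≤ infDist z {y | ∃ a ∈ S, ∀ i, y i = a} := by
  rw [setOf_diag_eq_image, le_infDist (hS.image _)]
  rintro _ ⟨a, ha, rfl⟩
  have hsqrt : 1 ≤ √(m : ℝ) := Real.one_le_sqrt.2 (Nat.one_le_cast.2 hm)
  calc infDist (coordMean z) S ≤ dist (coordMean z) a := infDist_le_dist_of_mem ha
    _ ≤ √m * dist (coordMean z) a := le_mul_of_one_le_left dist_nonneg hsqrt
    _ ≤ dist z (diagMap m a) := sqrt_mul_dist_coordMean_le z a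

lemma coordMean_mem_closedBall (hm : 0 < m) {z : PiLp 2 (fun _ : Fin m => E)} {xb : E}
    {δ : ℝ} (hz : z ∈ closedBall (diagMap m xb) (√m * δ)) :
    coordMean z ∈ closedBall xb δ := by
  have hsqrt : 0 < √(m : ℝ) := Real.sqrt_pos.2 (Nat.cast_pos.2 hm)
  exact le_of_mul_le_mul_left ((sqrt_mul_dist_coordMean_le z xb).trans hz) hsqrt

theorem infDist_pi_inter_diag_le (hm : 0 < m) {C : Fin m → Set E} {S : Set E}
    (hC : ∀ i, (C i).Nonempty) (hS : S.Nonempty) {xb : E} {κ δ : ℝ} (hκ : 0 ≤ κ)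
    (hδ : 0 < δ) (hlr : ∀ w ∈ closedBall xb δ,
      infDist w ((⋂ i, C i) ∩ S) ≤ κ * max (⨆ i, infDist w (C i)) (infDist w S))
    {z : PiLp 2 (fun _ : Fin m => E)} (hz : z ∈ closedBall (diagMap m xb) (√m * δ / 2)) :
    infDist z ({y | ∀ i, y i ∈ C i} ∩ {y | ∃ a ∈ S, ∀ i, y i = a})
      ≤ (1 + 2 * κ * √m)
        * max (infDist z {y | ∀ i, y i ∈ C i}) (infDist z {y | ∃ a ∈ S, ∀ i, y i = a}) := by
  have : Nonempty (Fin m) := Fin.pos_iff_nonempty.1 hm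
  set w := coordMean z
  set ρ := max (infDist z {y | ∀ i, y i ∈ C i}) (infDist z {y | ∃ a ∈ S, ∀ i, y i = a})
  have hρ : 0 ≤ ρ := le_max_of_le_left infDist_nonneg
  have hzw : dist z (diagMap m w) ≤ ρ :=
    (dist_diagMap_coordMean_le_infDist hS z).trans (le_max_right _ _)
  have hwC : ∀ i, infDist w (C i) ≤ 2 * ρ := fun i => calc
    infDist w (C i) ≤ infDist (z i) (C i) + dist (z i) w := by
        rw [dist_comm]; exact infDist_le_infDist_add_dist
    _ ≤ ρ + ρ := add_le_add ((infDist_apply_le_infDist_pi hC z i).trans (le_max_left _ _))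
        ((PiLp.dist_apply_le z (diagMap m w) i).trans hzw)
    _ = 2 * ρ := (two_mul ρ).symm
  have hwS : infDist w S ≤ 2 * ρ := by
    have := (infDist_coordMean_le_infDist hS hm z).trans (le_max_right _ _ : _ ≤ ρ)
    linarith
  have hw : w ∈ closedBall xb δ :=
    closedBall_subset_closedBall (half_le_self hδ.le)
      (coordMean_mem_closedBall hm (mul_div_assoc _ δ 2 ▸ hz))
  have hwI : infDist w ((⋂ i, C i) ∩ S) ≤ κ * (2 * ρ) :=
    (hlr w hw).trans (mul_le_mul_of_nonneg_left (max_le (ciSup_le hwC) hwS) hκ)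
  calc infDist z ({y | ∀ i, y i ∈ C i} ∩ {y | ∃ a ∈ S, ∀ i, y i = a})
      ≤ infDist (diagMap m w) ({y | ∀ i, y i ∈ C i} ∩ {y | ∃ a ∈ S, ∀ i, y i = a})
        + dist z (diagMap m w) := infDist_le_infDist_add_dist
    _ ≤ √m * infDist w ((⋂ i, C i) ∩ S) + ρ := by
        rw [setOf_pi_inter_diag_eq_image]
        exact add_le_add (infDist_image_le_mul (Real.sqrt_nonneg _)
          fun y _ => (dist_diagMap_diagMap w y).le) hzw
    _ ≤ √m * (κ * (2 * ρ)) + ρ := by gcongr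
    _ = (1 + 2 * κ * √m) * ρ := by ring

end DiagonalProduct

theorem stmt8_general (r : ℕ) (hr : 2 ≤ r)
    (C : Fin (r - 1) → Set X) (Cr : Set X)
    (hne : ∀ i, (C i).Nonempty)
    (hner : Cr.Nonempty)
    (xb : X) (κ δ : ℝ) (hκ : 0 ≤ κ) (hδ : 0 < δ)
    (hlr : ∀ z ∈ Metric.closedBall xb δ,
      Metric.infDist z ((⋂ i, C i) ∩ Cr)
        ≤ κ * max (⨆ i, Metric.infDist z (C i)) (Metric.infDist z Cr)) :
    ∀ z ∈ Metric.closedBall (diagMap (r - 1) xb) (Real.sqrt ((r : ℝ) - 1) * δ / 2),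
      Metric.infDist z
          ({y : PiLp 2 (fun _ : Fin (r - 1) => X) | ∀ i, y i ∈ C i}
            ∩ {y : PiLp 2 (fun _ : Fin (r - 1) => X) | ∃ a ∈ Cr, ∀ i, y i = a})
        ≤ (1 + 2 * κ * Real.sqrt ((r : ℝ) - 1))
            * max (Metric.infDist z {y : PiLp 2 (fun _ : Fin (r - 1) => X) | ∀ i, y i ∈ C i})
                  (Metric.infDist z
                    {y : PiLp 2 (fun _ : Fin (r - 1) => X) | ∃ a ∈ Cr, ∀ i, y i = a}) := by
  intro z hz
  have hcast : ((r - 1 : ℕ) : ℝ) = (r : ℝ) - 1 := by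
    rw [Nat.cast_sub (by omega), Nat.cast_one]
  rw [← hcast] at hz ⊢
  exact DiagonalProduct.infDist_pi_inter_diag_le (by omega) hne hner hκ hδ hlr hz

theorem stmt8 (r : ℕ) (hr : 2 ≤ r)
    (C : Fin (r - 1) → Set X) (Cr : Set X)
    (hne : ∀ i, (C i).Nonempty) (hcl : ∀ i, IsClosed (C i))
    (hner : Cr.Nonempty) (hclr : IsClosed Cr)
    (xb : X) (κ δ : ℝ) (hκ : 0 ≤ κ) (hδ : 0 < δ)
    (hlr : ∀ z ∈ Metric.closedBall xb δ,
      Metric.infDist z ((⋂ i, C i) ∩ Cr)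
        ≤ κ * max (⨆ i, Metric.infDist z (C i)) (Metric.infDist z Cr)) :
    ∀ z ∈ Metric.closedBall (diagMap (r - 1) xb) (Real.sqrt ((r : ℝ) - 1) * δ / 2),
      Metric.infDist z
          ({y : PiLp 2 (fun _ : Fin (r - 1) => X) | ∀ i, y i ∈ C i}
            ∩ {y : PiLp 2 (fun _ : Fin (r - 1) => X) | ∃ a ∈ Cr, ∀ i, y i = a})
        ≤ (1 + 2 * κ * Real.sqrt ((r : ℝ) - 1))
            * max (Metric.infDist z {y : PiLp 2 (fun _ : Fin (r - 1) => X) | ∀ i, y i ∈ C i})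
                  (Metric.infDist z
                    {y : PiLp 2 (fun _ : Fin (r - 1) => X) | ∃ a ∈ Cr, ∀ i, y i = a}) :=
  stmt8_general r hr C Cr hne hner xb κ δ hκ hδ hlr
end
end
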